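/- Let M be the set of fixed-point-free involutions in the symmetric group on the set {1, 2, 3, 4, 5, 6} (M has exactly 15 elements), and let the subgroup H of S₆ generated by the permutations (3 4)(5 6) and (1 2)(3 5)(4 6) act on M by conjugation. Then this action has exactly 8 orbits: exactly 3 orbits of size 1, exactly 4 orbits of size 2, and exactly 1 orbit of size 4. -/

import Mathlib

/-!
The two generators are commuting involutions, so `H14` is the Klein four-group `{1, a, b, ab}`
and every conjugation orbit is the image of that four-element set. All counts then become
statements about finsets of permutations of `Fin 6`, decided by evaluation.
-/

open Equiv

def FPFInv : Set (Equiv.Perm (Fin 6)) := {σ | σ * σ = 1 ∧ ∀ i, σ i ≠ i}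

def H14 : Subgroup (Equiv.Perm (Fin 6)) :=
  Subgroup.closure
    {Equiv.swap 2 3 * Equiv.swap 4 5,
     Equiv.swap 0 1 * Equiv.swap 2 4 * Equiv.swap 3 5}

def Orbits14 : Set (Set (Equiv.Perm (Fin 6))) :=
  (fun σ => {τ | ∃ g ∈ H14, g * σ * g⁻¹ = τ}) '' FPFInv

theorem Subgroup.coe_closure_pair_of_commute {G : Type*} [Group G] {a b : G}
    (ha : a * a = 1) (hb : b * b = 1) (hab : Commute a b) :
    (closure {a, b} : Set G) = {1, a, b, a * b} := by
  have ha' (x : G) : a * (a * x) = x := by rw [← mul_assoc, ha, one_mul]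
  have hba : b * a = a * b := hab.eq.symm
  have hba' (x : G) : b * (a * x) = a * (b * x) := by rw [← mul_assoc, hba, mul_assoc]
  have ha_inv : a⁻¹ = a := inv_eq_of_mul_eq_one_right ha
  have hb_inv : b⁻¹ = b := inv_eq_of_mul_eq_one_right hb
  refine Set.Subset.antisymm (fun x hx => ?_) ?_
  · induction hx using closure_induction with
    | mem x hx => rcases hx with rfl | rfl <;> simp
    | one => simp
    | mul x y _ _ hx hy =>
      rcases hx with rfl | rfl | rfl | rfl <;> rcases hy with rfl | rfl | rfl | rfl <;>
        simp [mul_assoc, ha, hb, ha', hba, hba']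
    | inv x _ hx =>
      rcases hx with rfl | rfl | rfl | rfl <;> simp [ha_inv, hb_inv, hba]
  · have := subset_closure (k := ({a, b} : Set G))
    simp only [Set.insert_subset_iff, Set.singleton_subset_iff, SetLike.mem_coe]
    exact ⟨one_mem _, this (by simp), this (by simp),
      mul_mem (this (by simp)) (this (by simp))⟩

theorem Subgroup.setOf_exists_mem_conj_eq {G : Type*} [Group G] [DecidableEq G]
    {H : Subgroup G} {s : Finset G} (hs : (H : Set G) = s) (σ : G) :
    {τ | ∃ g ∈ H, g * σ * g⁻¹ = τ} = ↑(s.image fun g => g * σ * g⁻¹) := by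
  ext τ
  simp [← SetLike.mem_coe, hs]

theorem Finset.ncard_image_coe {α : Type*} (T : Finset (Finset α)) :
    (((↑) : Finset α → Set α) '' ↑T).ncard = T.card := by
  rw [Set.ncard_image_of_injective _ Finset.coe_injective, Set.ncard_coe_finset]

theorem Finset.sep_ncard_image_coe {α : Type*} (T : Finset (Finset α)) (n : ℕ) :
    {S ∈ ((↑) : Finset α → Set α) '' ↑T | S.ncard = n} =
      ((↑) : Finset α → Set α) '' ↑(T.filter fun F => F.card = n) := by
  ext S
  simp only [Set.mem_ofPred_eq, Set.mem_image, Finset.coe_filter]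
  constructor
  · rintro ⟨⟨F, hF, rfl⟩, hn⟩
    exact ⟨F, ⟨hF, by rwa [Set.ncard_coe_finset] at hn⟩, rfl⟩
  · rintro ⟨F, ⟨hF, hn⟩, rfl⟩
    exact ⟨⟨F, hF, rfl⟩, by rwa [Set.ncard_coe_finset]⟩

def fpfInvFinset : Finset (Perm (Fin 6)) := {σ | σ * σ = 1 ∧ ∀ i, σ i ≠ i}

def h14Finset : Finset (Perm (Fin 6)) :=
  {1, swap 2 3 * swap 4 5, swap 0 1 * swap 2 4 * swap 3 5,
    swap 2 3 * swap 4 5 * (swap 0 1 * swap 2 4 * swap 3 5)}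

def conjOrbit14 (σ : Perm (Fin 6)) : Finset (Perm (Fin 6)) :=
  h14Finset.image fun g => g * σ * g⁻¹

theorem coe_fpfInvFinset : (fpfInvFinset : Set (Perm (Fin 6))) = FPFInv := by
  ext σ
  simp [fpfInvFinset, FPFInv]

theorem coe_H14 : (H14 : Set (Perm (Fin 6))) = h14Finset := by
  rw [H14, Subgroup.coe_closure_pair_of_commute (by decide) (by decide)
    (commute_iff_eq _ _ |>.mpr (by decide))]
  simp [h14Finset]

theorem Orbits14_eq :
    Orbits14 = ((↑) : Finset (Perm (Fin 6)) → Set (Perm (Fin 6))) ''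
      ↑(fpfInvFinset.image conjOrbit14) := by
  rw [Orbits14, ← coe_fpfInvFinset, Finset.coe_image, Set.image_image]
  exact Set.image_congr fun σ _ => Subgroup.setOf_exists_mem_conj_eq coe_H14 σ

theorem stmt14 :
    FPFInv.ncard = 15 ∧
    Orbits14.ncard = 8 ∧
    {S ∈ Orbits14 | S.ncard = 1}.ncard = 3 ∧
    {S ∈ Orbits14 | S.ncard = 2}.ncard = 4 ∧
    {S ∈ Orbits14 | S.ncard = 4}.ncard = 1 := by
  simp only [← coe_fpfInvFinset, Set.ncard_coe_finset, Orbits14_eq,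
    Finset.sep_ncard_image_coe, Finset.ncard_image_coe]
  refine ⟨?_, ?_, ?_, ?_, ?_⟩
  · decide
  · decide
  · decide
  · decide
  · decide
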